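/- Let n ≥ 2 and 1 ≤ k ≤ n. Let φ := (1/√n) ∑_{i=0}^{n-1} e_i ⊗ e_i and ψ := (1/√n) ∑_{i=0}^{n-1} e_i ⊗ e_{i+1 mod n} in ℂ^n ⊗ ℂ^n, and set X := φ ψ^* ∈ M_n ⊗ M_n. Then there exist unit vectors v, w ∈ ℂ^n ⊗ ℂ^n with SR(v) ≤ k, SR(w) ≤ k, and a matrix P ∈ M_n with (P ⊗ I_n) v = w, such that ⟨v, X w⟩ = k/n. Consequently sup{ |⟨v, X w⟩| : v, w unit vectors with SR(v), SR(w) ≤ k and (P ⊗ I_n) v = w for some P ∈ M_n } ≥ k/n. (This is the second computation of Example 5.4, showing the OMIN^k matrix-order norm of X is twice its minimal order norm.) -/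

import Mathlib

open scoped ComplexOrder Kronecker
open Matrix

noncomputable section

/-- The standard inner product `⟨v, w⟩ = ∑ conj(vᵢ) wᵢ` on `I → ℂ`. -/
def inprod {I : Type*} [Fintype I] (v w : I → ℂ) : ℂ :=
  ∑ i, (starRingEnd ℂ) (v i) * w i

/-- `v` is a unit vector. -/
def UnitVec {I : Type*} [Fintype I] (v : I → ℂ) : Prop :=
  inprod v v = 1

/-- The Schmidt rank of a vector in `ℂ^I ⊗ ℂ^J`, i.e. the rank of the associated
`I × J` coefficient matrix. -/
noncomputable def SchmidtRank {I J : Type*} [Fintype I] [Fintype J] (v : I × J → ℂ) : ℕ :=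
  (Matrix.of fun i j => v (i, j)).rank

/-- The operator norm (largest singular value) of a matrix, as
`sup { |⟨v, A w⟩| : v, w unit vectors }`. -/
noncomputable def opNorm {I J : Type*} [Fintype I] [Fintype J] (A : Matrix I J ℂ) : ℝ :=
  sSup { t : ℝ | ∃ v w, UnitVec v ∧ UnitVec w ∧ t = ‖inprod v (A.mulVec w)‖ }

/-- The `S(k)`-norm of `X ∈ M_I ⊗ M_J`. -/
noncomputable def SNorm {I J : Type*} [Fintype I] [Fintype J] (k : ℕ)
    (X : Matrix (I × J) (I × J) ℂ) : ℝ :=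
  sSup { t : ℝ | ∃ v w : I × J → ℂ, UnitVec v ∧ UnitVec w ∧
    SchmidtRank v ≤ k ∧ SchmidtRank w ≤ k ∧
    t = ‖inprod v (X.mulVec w)‖ }

/-- `X` is a `k`-block positive (Hermitian) operator: `⟨v, X v⟩ ≥ 0` for every
vector of Schmidt rank at most `k`. -/
def kBlockPos {I J : Type*} [Fintype I] [Fintype J] (k : ℕ)
    (X : Matrix (I × J) (I × J) ℂ) : Prop :=
  X.IsHermitian ∧ ∀ v : I × J → ℂ, SchmidtRank v ≤ k → 0 ≤ inprod v (X.mulVec v)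

/-- `ρ` has Schmidt number at most `k` (in particular it is positive semidefinite):
it is a finite nonnegative combination of rank-one projections onto vectors of
Schmidt rank at most `k`. -/
def SchmidtNumberLE {I J : Type*} [Fintype I] [Fintype J] (k : ℕ)
    (ρ : Matrix (I × J) (I × J) ℂ) : Prop :=
  ∃ (N : ℕ) (c : Fin N → ℝ) (v : Fin N → (I × J → ℂ)),
    (∀ i, 0 ≤ c i) ∧ (∀ i, SchmidtRank (v i) ≤ k) ∧
    ρ = ∑ i, (c i : ℂ) • Matrix.vecMulVec (v i) (star (v i))

/-- `id_I ⊗ Φ` : the map applying `Φ` to the second tensor factor. -/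
noncomputable def tensorId {I : Type*} [Fintype I] {a b : ℕ}
    (Φ : Matrix (Fin a) (Fin a) ℂ →ₗ[ℂ] Matrix (Fin b) (Fin b) ℂ)
    (X : Matrix (I × Fin a) (I × Fin a) ℂ) : Matrix (I × Fin b) (I × Fin b) ℂ :=
  Matrix.of fun p q => Φ (Matrix.of fun s t => X (p.1, s) (q.1, t)) p.2 q.2

/-- The trace norm `‖X‖_tr = Tr √(X^* X)`. -/
noncomputable def trNorm {I : Type*} [Fintype I] [DecidableEq I] (X : Matrix I I ℂ) : ℝ :=
  (((Matrix.posSemidef_conjTranspose_mul_self X).1.eigenvectorUnitary : Matrix I I ℂ) *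
    Matrix.diagonal (((↑) : ℝ → ℂ) ∘ (fun x : ℝ => Real.sqrt x) ∘
      (Matrix.posSemidef_conjTranspose_mul_self X).1.eigenvalues) *
    (star (Matrix.posSemidef_conjTranspose_mul_self X).1.eigenvectorUnitary : Matrix I I ℂ)).trace.re

end
/-- The maximally entangled vector `φ = (1/√n) ∑ eᵢ ⊗ eᵢ`. -/
noncomputable def phiVec (n : ℕ) : Fin n × Fin n → ℂ :=
  fun p => if (p.1 : ℕ) = (p.2 : ℕ) then ((Real.sqrt n)⁻¹ : ℝ) else 0

/-- The shifted maximally entangled vector `ψ = (1/√n) ∑ eᵢ ⊗ e_{i+1 mod n}`. -/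
noncomputable def psiVec (n : ℕ) : Fin n × Fin n → ℂ :=
  fun p => if ((p.1 : ℕ) + 1) % n = (p.2 : ℕ) then ((Real.sqrt n)⁻¹ : ℝ) else 0

/-- The rank-one operator `X = |φ⟩⟨ψ|`. -/
noncomputable def exOp (n : ℕ) : Matrix (Fin n × Fin n) (Fin n × Fin n) ℂ :=
  Matrix.vecMulVec (phiVec n) (star (psiVec n))

/-!
Take `v = k^{-1/2} ∑_{j<k} e_j ⊗ e_j` and `w = k^{-1/2} ∑_{j<k} e_{j-1} ⊗ e_j`: both have
Schmidt rank `k`, and `w` is obtained from `v` by applying the cyclic shift to the first factor.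
As `X = φψ^*` has rank one, `⟨v, X w⟩ = ⟨v, φ⟩⟨ψ, w⟩ = √(k/n) · √(k/n) = k/n`. The supremum is
finite because `|⟨v, X w⟩| ≤ ‖φ‖ ‖ψ‖` for unit vectors `v`, `w`.
-/

open Finset

namespace Matrix

variable {m n R : Type*}

theorem rank_le_card_of_forall_notMem [Fintype n] [DecidableEq n] [Field R]
    (M : Matrix m n R) (s : Finset n) (h : ∀ i, ∀ j ∉ s, M i j = 0) : M.rank ≤ #s := by
  classical
  set D : Matrix n n R := diagonal fun j => if j ∈ s then 1 else 0
  have hM : M = M * D := by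
    ext i j
    by_cases hj : j ∈ s <;> simp [D, hj, h i j]
  calc M.rank ≤ D.rank := hM ▸ rank_mul_le_right M D
    _ = #s := by simp [D, rank_diagonal, Fintype.card_subtype]

theorem permMatrix_kronecker_one [DecidableEq m] [DecidableEq n] [MulZeroOneClass R]
    (σ : Equiv.Perm m) :
    σ.permMatrix R ⊗ₖ (1 : Matrix n n R) =
      Equiv.Perm.permMatrix R (σ.prodCongr (Equiv.refl n)) := by
  ext ⟨a, i⟩ ⟨b, j⟩
  by_cases hab : σ a = b <;> by_cases hij : i = j <;>
    simp [PEquiv.toMatrix_apply, hab, hij]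

end Matrix

section InnerProduct

variable {I : Type*} [Fintype I]

theorem inprod_eq_inner (v w : I → ℂ) :
    inprod v w = inner ℂ (WithLp.toLp 2 v) (WithLp.toLp 2 w) := by
  simp only [inprod, PiLp.inner_apply, RCLike.inner_apply]
  exact sum_congr rfl fun i _ => mul_comm _ _

theorem UnitVec.norm_toLp {v : I → ℂ} (hv : UnitVec v) : ‖WithLp.toLp 2 v‖ = 1 := by
  rw [norm_eq_sqrt_re_inner (𝕜 := ℂ), ← inprod_eq_inner, hv]
  simp

theorem UnitVec.norm_inprod_left_le {v : I → ℂ} (hv : UnitVec v) (u : I → ℂ) :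
    ‖inprod v u‖ ≤ ‖WithLp.toLp 2 u‖ := by
  simpa [inprod_eq_inner, hv.norm_toLp] using
    norm_inner_le_norm (𝕜 := ℂ) (WithLp.toLp 2 v) (WithLp.toLp 2 u)

theorem UnitVec.norm_inprod_right_le {w : I → ℂ} (hw : UnitVec w) (u : I → ℂ) :
    ‖inprod u w‖ ≤ ‖WithLp.toLp 2 u‖ := by
  simpa [inprod_eq_inner, hw.norm_toLp] using
    norm_inner_le_norm (𝕜 := ℂ) (WithLp.toLp 2 u) (WithLp.toLp 2 w)

theorem inprod_vecMulVec_mulVec (a b v w : I → ℂ) :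
    inprod v (vecMulVec a (star b) *ᵥ w) = inprod v a * inprod b w := by
  simp only [inprod, mulVec, vecMulVec_apply, dotProduct, Pi.star_apply, RCLike.star_def]
  rw [sum_mul_sum]
  simp only [mul_sum]
  exact sum_congr rfl fun i _ => sum_congr rfl fun j _ => by ring

theorem norm_inprod_vecMulVec_mulVec_le (a b : I → ℂ) {v w : I → ℂ} (hv : UnitVec v)
    (hw : UnitVec w) :
    ‖inprod v (vecMulVec a (star b) *ᵥ w)‖ ≤ ‖WithLp.toLp 2 a‖ * ‖WithLp.toLp 2 b‖ := by
  rw [inprod_vecMulVec_mulVec, norm_mul]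
  exact mul_le_mul (hv.norm_inprod_left_le a) (hw.norm_inprod_right_le b) (norm_nonneg _)
    (norm_nonneg _)

end InnerProduct

section GraphVec

variable {I J : Type*} [Fintype I] [Fintype J] [DecidableEq I] [DecidableEq J]

noncomputable def graphVec (s : Finset J) (g : J → I) : I × J → ℂ :=
  fun p => if p.2 ∈ s ∧ p.1 = g p.2 then ((√(#s : ℝ))⁻¹ : ℝ) else 0

variable (s : Finset J) (g : J → I)

theorem inprod_graphVec_left (u : I × J → ℂ) :
    inprod (graphVec s g) u = ((√(#s : ℝ))⁻¹ : ℝ) * ∑ j ∈ s, u (g j, j) := by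
  rw [inprod, Fintype.sum_prod_type_right, mul_sum, ← sum_subset (subset_univ s)]
  · exact sum_congr rfl fun j hj => by simp [graphVec, hj, apply_ite (starRingEnd ℂ)]
  · intro j _ hj
    simp [graphVec, hj]

theorem inprod_graphVec_right (u : I × J → ℂ) :
    inprod u (graphVec s g) = ((√(#s : ℝ))⁻¹ : ℝ) * ∑ j ∈ s, starRingEnd ℂ (u (g j, j)) := by
  rw [inprod, Fintype.sum_prod_type_right, mul_sum, ← sum_subset (subset_univ s)]
  · exact sum_congr rfl fun j hj => by simp [graphVec, hj, mul_comm]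
  · intro j _ hj
    simp [graphVec, hj]

theorem inprod_graphVec_left_of_forall_eq {u : I × J → ℂ} {c : ℝ}
    (hu : ∀ j ∈ s, u (g j, j) = c) : inprod (graphVec s g) u = ((√(#s : ℝ) * c : ℝ) : ℂ) := by
  rw [inprod_graphVec_left, sum_congr rfl hu, sum_const, nsmul_eq_mul, ← mul_assoc]
  norm_cast
  rw [inv_mul_eq_div, Real.div_sqrt]

theorem inprod_graphVec_right_of_forall_eq {u : I × J → ℂ} {c : ℝ}
    (hu : ∀ j ∈ s, u (g j, j) = c) : inprod u (graphVec s g) = ((√(#s : ℝ) * c : ℝ) : ℂ) := by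
  have hu' : ∀ j ∈ s, starRingEnd ℂ (u (g j, j)) = c := fun j hj => by
    rw [hu j hj, Complex.conj_ofReal]
  rw [inprod_graphVec_right, sum_congr rfl hu', sum_const, nsmul_eq_mul, ← mul_assoc]
  norm_cast
  rw [inv_mul_eq_div, Real.div_sqrt]

theorem unitVec_graphVec (hs : s.Nonempty) : UnitVec (graphVec s g) := by
  have hc : ∀ j ∈ s, graphVec s g (g j, j) = ((√(#s : ℝ))⁻¹ : ℝ) := fun j hj => by
    simp [graphVec, hj]
  have hsqrt : 0 < √(#s : ℝ) := Real.sqrt_pos.2 (by exact_mod_cast hs.card_pos)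
  rw [UnitVec, inprod_graphVec_left_of_forall_eq s g hc, mul_inv_cancel₀ hsqrt.ne',
    Complex.ofReal_one]

theorem schmidtRank_graphVec_le : SchmidtRank (graphVec s g) ≤ #s :=
  rank_le_card_of_forall_notMem _ s fun i j hj => by simp [graphVec, hj]

theorem permMatrix_kronecker_one_mulVec_graphVec (σ : Equiv.Perm I) :
    (σ.permMatrix ℂ ⊗ₖ (1 : Matrix J J ℂ)) *ᵥ graphVec s g = graphVec s (σ.symm ∘ g) := by
  rw [permMatrix_kronecker_one, permMatrix_mulVec]
  ext ⟨a, j⟩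
  simp [graphVec, Equiv.eq_symm_apply]

end GraphVec

theorem phiVec_apply_self {n : ℕ} (j : Fin n) : phiVec n (j, j) = ((√(n : ℝ))⁻¹ : ℝ) :=
  if_pos rfl

theorem psiVec_finRotate_symm_apply {n : ℕ} (j : Fin n) :
    psiVec n ((finRotate n).symm j, j) = ((√(n : ℝ))⁻¹ : ℝ) := by
  have := j.neZero
  have h := congrArg Fin.val ((finRotate n).apply_symm_apply j)
  rw [finRotate_apply, Fin.val_add, Fin.val_one', Nat.add_mod_mod] at h
  exact if_pos h

theorem example_matrix_order_norm_general (n k : ℕ) (hk : 1 ≤ k) (hkn : k ≤ n) :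
    (∃ (v w : Fin n × Fin n → ℂ) (P : Matrix (Fin n) (Fin n) ℂ),
      UnitVec v ∧ UnitVec w ∧ SchmidtRank v ≤ k ∧ SchmidtRank w ≤ k ∧
      (P ⊗ₖ (1 : Matrix (Fin n) (Fin n) ℂ)).mulVec v = w ∧
      inprod v ((exOp n).mulVec w) = (k : ℂ) / n) ∧
    (k : ℝ) / n ≤
      sSup { t : ℝ | ∃ v w : Fin n × Fin n → ℂ, UnitVec v ∧ UnitVec w ∧
        SchmidtRank v ≤ k ∧ SchmidtRank w ≤ k ∧
        (∃ P : Matrix (Fin n) (Fin n) ℂ,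
          (P ⊗ₖ (1 : Matrix (Fin n) (Fin n) ℂ)).mulVec v = w) ∧
        t = ‖inprod v ((exOp n).mulVec w)‖ } := by
  set s : Finset (Fin n) := univ.map (Fin.castLEEmb hkn)
  have hs : #s = k := by simp [s]
  have hs₀ : s.Nonempty := card_pos.1 (hs ▸ hk)
  set v := graphVec s id
  set w := graphVec s (finRotate n).symm
  have hvw : ((finRotate n).permMatrix ℂ ⊗ₖ (1 : Matrix (Fin n) (Fin n) ℂ)) *ᵥ v = w :=
    permMatrix_kronecker_one_mulVec_graphVec s id _
  have hval : inprod v (exOp n *ᵥ w) = (k : ℂ) / n := by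
    rw [exOp, inprod_vecMulVec_mulVec,
      inprod_graphVec_left_of_forall_eq s id fun j _ => phiVec_apply_self j,
      inprod_graphVec_right_of_forall_eq s _ fun j _ => psiVec_finRotate_symm_apply j, hs,
      ← Complex.ofReal_mul, mul_mul_mul_comm, Real.mul_self_sqrt k.cast_nonneg, ← mul_inv,
      Real.mul_self_sqrt n.cast_nonneg]
    push_cast
    ring
  have hv := unitVec_graphVec s id hs₀
  have hw := unitVec_graphVec s (finRotate n).symm hs₀
  have hvr := hs ▸ schmidtRank_graphVec_le s id
  have hwr := hs ▸ schmidtRank_graphVec_le s (finRotate n).symm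
  refine ⟨⟨v, w, _, hv, hw, hvr, hwr, hvw, hval⟩,
    le_csSup ?_ ⟨v, w, hv, hw, hvr, hwr, ⟨_, hvw⟩, ?_⟩⟩
  · refine ⟨‖WithLp.toLp 2 (phiVec n)‖ * ‖WithLp.toLp 2 (psiVec n)‖, ?_⟩
    rintro t ⟨v', w', hv', hw', -, -, -, rfl⟩
    exact norm_inprod_vecMulVec_mulVec_le _ _ hv' hw'
  · rw [hval, norm_div, Complex.norm_natCast, Complex.norm_natCast]

/-- Example 5.4, second computation: the `OMIN^k` matrix-order norm of `X = |φ⟩⟨ψ|`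
is at least `k/n`. -/
theorem example_matrix_order_norm (n k : ℕ) (hn : 2 ≤ n) (hk : 1 ≤ k) (hkn : k ≤ n) :
    (∃ (v w : Fin n × Fin n → ℂ) (P : Matrix (Fin n) (Fin n) ℂ),
      UnitVec v ∧ UnitVec w ∧ SchmidtRank v ≤ k ∧ SchmidtRank w ≤ k ∧
      (P ⊗ₖ (1 : Matrix (Fin n) (Fin n) ℂ)).mulVec v = w ∧
      inprod v ((exOp n).mulVec w) = (k : ℂ) / n) ∧
    (k : ℝ) / n ≤
      sSup { t : ℝ | ∃ v w : Fin n × Fin n → ℂ, UnitVec v ∧ UnitVec w ∧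
        SchmidtRank v ≤ k ∧ SchmidtRank w ≤ k ∧
        (∃ P : Matrix (Fin n) (Fin n) ℂ,
          (P ⊗ₖ (1 : Matrix (Fin n) (Fin n) ℂ)).mulVec v = w) ∧
        t = ‖inprod v ((exOp n).mulVec w)‖ } :=
  example_matrix_order_norm_general n k hk hkn
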